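/- Let T be a spherically homogeneous rooted tree, let G ≤ Aut(T) be a weakly branch group, and let H₁, H₂ ≤ G be subgroups each of which is k-subnormal in G for some k ∈ ℕ, with [H₁, H₂] = 1. If H₂ is non-trivial, then there exists a vertex v of T such that H₁ ≤ St_G(v) and φ_v(H₁) = 1. -/

import Mathlib

open Equiv

namespace PaperDefs


/-! ### Spherically homogeneous rooted trees -/

variable (A : ℕ → Type)

/-- Vertices of the spherically homogeneous rooted tree determined by the
sequence of alphabets `A`: words `a₁a₂⋯aₙ` with `aᵢ ∈ A i`. -/
def Vertex : Type := Σ n : ℕ, ∀ i : Fin n, A i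

/-- The prefix relation on vertices. -/
def IsPref (v w : Vertex A) : Prop :=
  ∃ h : v.1 ≤ w.1, ∀ i : Fin v.1, v.2 i = w.2 (Fin.castLE h i)

/-- The automorphism group of the tree: permutations of the vertex set that
preserve the prefix relation. -/
def treeAut : Subgroup (Perm (Vertex A)) where
  carrier := {g | ∀ v w, IsPref A v w ↔ IsPref A (g v) (g w)}
  one_mem' := by intro v w; simp
  mul_mem' := by
    intro a b ha hb v w
    simpa [Equiv.Perm.mul_apply] using (hb v w).trans (ha (b v) (b w))
  inv_mem' := by
    intro a ha v w
    simpa using (ha (a⁻¹ v) (a⁻¹ w)).symm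

/-- The stabiliser of the vertex `v` in `G`. -/
def stG (G : Subgroup (Perm (Vertex A))) (v : Vertex A) : Subgroup (Perm (Vertex A)) :=
  G ⊓ MulAction.stabilizer (Perm (Vertex A)) v

/-- The rigid stabiliser of the vertex `v` in `G`: elements of `G` fixing every
vertex that does not have `v` as a prefix. -/
def rist (G : Subgroup (Perm (Vertex A))) (v : Vertex A) : Subgroup (Perm (Vertex A)) where
  carrier := {g | g ∈ G ∧ ∀ w, ¬ IsPref A v w → g w = w}
  one_mem' := ⟨G.one_mem, fun w _ => by simp⟩
  mul_mem' := by
    rintro a b ⟨haG, ha⟩ ⟨hbG, hb⟩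
    refine ⟨G.mul_mem haG hbG, fun w hw => ?_⟩
    simp [Equiv.Perm.mul_apply, hb w hw, ha w hw]
  inv_mem' := by
    rintro a ⟨haG, ha⟩
    refine ⟨G.inv_mem haG, fun w hw => ?_⟩
    conv_lhs => rw [← ha w hw]
    simp

/-- The rigid stabiliser of the `n`-th level: the subgroup generated by the rigid
stabilisers of the vertices of level `n`. -/
def ristLevel (G : Subgroup (Perm (Vertex A))) (n : ℕ) : Subgroup (Perm (Vertex A)) :=
  ⨆ (v : Vertex A) (_ : v.1 = n), rist A G v

/-- `G` acts spherically transitively: transitively on every level. -/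
def SphTrans (G : Subgroup (Perm (Vertex A))) : Prop :=
  ∀ v w : Vertex A, v.1 = w.1 → ∃ g ∈ G, g v = w

/-- `G ≤ Aut T` is a weakly branch group. -/
def IsWeaklyBranch (G : Subgroup (Perm (Vertex A))) : Prop :=
  G ≤ treeAut A ∧ SphTrans A G ∧ ∀ v : Vertex A, rist A G v ≠ ⊥

/-- `G ≤ Aut T` is a branch group. -/
def IsBranch (G : Subgroup (Perm (Vertex A))) : Prop :=
  IsWeaklyBranch A G ∧ ∀ n : ℕ, (ristLevel A G n).relIndex G ≠ 0

/-! ### Boundary of the tree -/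

/-- The boundary of the tree: infinite words. -/
def Boundary : Type := ∀ i : ℕ, A i

/-- The length-`n` prefix of a boundary point. -/
def bdryPrefix (ξ : Boundary A) (n : ℕ) : Vertex A := ⟨n, fun i => ξ i⟩

/-- The support of a subgroup `H` on the boundary: boundary points moved by some
element of `H` (a boundary point is moved by a tree automorphism iff one of its
finite prefixes is moved). -/
def supp (H : Subgroup (Perm (Vertex A))) : Set (Boundary A) :=
  {ξ | ∃ h ∈ H, ∃ n : ℕ, h (bdryPrefix A ξ n) ≠ bdryPrefix A ξ n}

/-! ### Sections / projections -/

/-- The shifted alphabet sequence, describing the subtree rooted at a vertex of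
level `n`. -/
def shift (n : ℕ) : ℕ → Type := fun i => A (i + n)

/-- Concatenation of a vertex `v` of level `n` with a vertex of the subtree `T_v`
(viewed in the shifted tree). -/
def concat (n : ℕ) (v : Vertex A) (hv : v.1 = n) (w : Vertex (shift A n)) : Vertex A :=
  ⟨n + w.1, fun i =>
    if h : (i : ℕ) < n then v.2 ⟨(i : ℕ), by omega⟩
    else cast (congrArg A (by have := i.isLt; omega : (i : ℕ) - n + n = (i : ℕ)))
      (w.2 ⟨(i : ℕ) - n, by have := i.isLt; omega⟩)⟩

/-- `projStab A G n v hv` is `G_v = φ_v(St_G(v))`, the image under the projection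
`φ_v` of the stabiliser of `v` in `G`, realised as a subgroup of the automorphisms
of the subtree `T_v` (identified with the tree on the shifted alphabet sequence):
it consists of those `σ` for which some `g ∈ G` stabilises `v` and satisfies
`g (v·w) = v·(σ w)` for every vertex `w` of the subtree. -/
def projStab (G : Subgroup (Perm (Vertex A))) (n : ℕ) (v : Vertex A) (hv : v.1 = n) :
    Subgroup (Perm (Vertex (shift A n))) where
  carrier := {σ | ∃ g ∈ G, g v = v ∧ ∀ w, g (concat A n v hv w) = concat A n v hv (σ w)}
  one_mem' := ⟨1, G.one_mem, by simp, fun w => by simp⟩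
  mul_mem' := by
    rintro σ τ ⟨g, hgG, hgv, hg⟩ ⟨g', hg'G, hg'v, hg'⟩
    refine ⟨g * g', G.mul_mem hgG hg'G, by simp [Equiv.Perm.mul_apply, hg'v, hgv], fun w => ?_⟩
    simp [Equiv.Perm.mul_apply, hg' w, hg (τ w)]
  inv_mem' := by
    rintro σ ⟨g, hgG, hgv, hg⟩
    refine ⟨g⁻¹, G.inv_mem hgG, by simpa using (congrArg (⇑g⁻¹) hgv).symm, fun w => ?_⟩
    have h1 : g (concat A n v hv (σ⁻¹ w)) = concat A n v hv w := by
      rw [hg (σ⁻¹ w)]; simp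
    calc g⁻¹ (concat A n v hv w) = g⁻¹ (g (concat A n v hv (σ⁻¹ w))) := by rw [h1]
      _ = concat A n v hv (σ⁻¹ w) := by simp

/-! ### Group-theoretic notions -/

/-- `H` is a normal subgroup of `K` (both being subgroups of an ambient group). -/
def NormalIn {P : Type*} [Group P] (H K : Subgroup P) : Prop :=
  H ≤ K ∧ ∀ k ∈ K, ∀ h ∈ H, k * h * k⁻¹ ∈ H

/-- `H` is `k`-subnormal in `G`: there is a chain `H = c k ⊴ ⋯ ⊴ c 0 = G`. -/
def SubnormalIn {P : Type*} [Group P] (H G : Subgroup P) (k : ℕ) : Prop :=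
  ∃ c : ℕ → Subgroup P, c 0 = G ∧ c k = H ∧ ∀ i < k, NormalIn (c (i + 1)) (c i)

/-- The iterated derived subgroup `H⁽ᵏ⁾` of a subgroup `H` of an ambient group. -/
def derivedIter {P : Type*} [Group P] (H : Subgroup P) : ℕ → Subgroup P
  | 0 => H
  | k + 1 => ⁅derivedIter H k, derivedIter H k⁆

/-- The class `𝓜𝓕` of groups all of whose maximal subgroups have finite index. -/
def MF (Γ : Type*) [Group Γ] : Prop :=
  ∀ M : Subgroup Γ, IsCoatom M → M.index ≠ 0

/-- Every proper quotient of `Γ` belongs to `𝓜𝓕`. -/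
def QuotientsMF (Γ : Type*) [Group Γ] : Prop :=
  ∀ (N : Subgroup Γ) [N.Normal], N ≠ ⊥ → MF (Γ ⧸ N)

/-- `H` is a prodense subgroup of `Γ`: `HN = Γ` for every nontrivial normal `N ⊴ Γ`. -/
def Prodense {Γ : Type*} [Group Γ] (H : Subgroup Γ) : Prop :=
  ∀ N : Subgroup Γ, N.Normal → N ≠ ⊥ → H ⊔ N = ⊤

/-- `H` is a prodense subgroup of `G`, both being subgroups of an ambient group:
`H ≤ G` and `HN = G` for every nontrivial subgroup `N ≤ G` normal in `G`. -/
def ProdenseIn {P : Type*} [Group P] (H G : Subgroup P) : Prop :=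
  H ≤ G ∧ ∀ N : Subgroup P, N ≤ G → NormalIn N G → N ≠ ⊥ → H ⊔ N = G

/-- `M` is a maximal subgroup of `G` (both subgroups of an ambient group). -/
def MaximalIn {P : Type*} [Group P] (M G : Subgroup P) : Prop :=
  M < G ∧ ∀ K : Subgroup P, M < K → K ≤ G → K = G

/-! If `h ∈ H` moves a vertex `u` and `H` is `k`-subnormal in `G`, then `H` contains the `k`-th
derived subgroup of `rist_G(u)`: inductively, for `a, b` in the previous derived subgroup,
`⁅a, ⁅b, h⁆⁆ = ⁅a, b⁆`, because `h b⁻¹ h⁻¹` lies in the rigid stabiliser of the disjoint vertex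
`h u` and so commutes with `a`. In a weakly branch group these derived subgroups are never
trivial (commute a nontrivial element of `rist_G(x)` with one moving `x`). Now let `h₂ ∈ H₂` move
`u`. If some `g ∈ H₁` moved a vertex `w` below `u`, a derived subgroup of `rist_G(w)` would lie
in `H₁ ∩ H₂`, so the next one would lie in `⁅H₁, H₂⁆ = 1`. Hence `H₁` fixes the subtree below
`u` pointwise, and `v = u` works. -/

open scoped commutatorElement

section Tree

variable {A : ℕ → Type}

lemma isPref_refl (v : Vertex A) : IsPref A v v := ⟨le_rfl, fun _ => rfl⟩

lemma IsPref.trans {u v w : Vertex A} (h₁ : IsPref A u v) (h₂ : IsPref A v w) :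
    IsPref A u w :=
  ⟨h₁.1.trans h₂.1, fun i => (h₁.2 i).trans (h₂.2 (Fin.castLE h₁.1 i))⟩

lemma IsPref.eq_of_length_eq {a b c : Vertex A} (ha : IsPref A a c) (hb : IsPref A b c)
    (h : a.1 = b.1) : a = b := by
  obtain ⟨n, f⟩ := a
  obtain ⟨m, g⟩ := b
  obtain rfl : n = m := h
  have hfg : f = g := funext fun i => (ha.2 i).trans (hb.2 i).symm
  rw [hfg]

lemma not_isPref_of_isPref_of_length_eq {x y w : Vertex A} (hxy : x ≠ y) (hl : x.1 = y.1)
    (hx : IsPref A x w) : ¬ IsPref A y w :=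
  fun hy => hxy (hx.eq_of_length_eq hy hl)

lemma card_isPref (v : Vertex A) : Nat.card {w // IsPref A w v} = v.1 + 1 := by
  rw [← Nat.card_fin (v.1 + 1)]
  refine Nat.card_eq_of_bijective
    (fun w => ⟨w.1.1, Nat.lt_succ_of_le w.2.1⟩) ⟨fun w w' h => ?_, fun i => ?_⟩
  · exact Subtype.ext (w.2.eq_of_length_eq w'.2 (congrArg Fin.val h))
  · exact ⟨⟨⟨i, fun j => v.2 (Fin.castLE (Nat.lt_succ_iff.mp i.2) j)⟩, _, fun _ => rfl⟩, rfl⟩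

lemma length_apply_of_mem_treeAut {g : Perm (Vertex A)} (hg : g ∈ treeAut A) (v : Vertex A) :
    (g v).1 = v.1 := by
  have e : {w // IsPref A w v} ≃ {w // IsPref A w (g v)} :=
    g.subtypeEquiv fun w => hg w v
  simpa [card_isPref] using (Nat.card_congr e).symm

lemma not_isPref_apply_of_isPref {g : Perm (Vertex A)} (hg : g ∈ treeAut A) {x w : Vertex A}
    (hx : g x ≠ x) (hxw : IsPref A x w) : ¬ IsPref A (g x) w :=
  not_isPref_of_isPref_of_length_eq hx.symm (length_apply_of_mem_treeAut hg x).symm hxw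

end Tree

section RigidStabiliser

variable {A : ℕ → Type} {G : Subgroup (Perm (Vertex A))} {x y : Vertex A}
  {a b : Perm (Vertex A)}

lemma rist_le (x : Vertex A) : rist A G x ≤ G := fun _ hg => hg.1

lemma isPref_of_mem_rist_of_apply_ne (ha : a ∈ rist A G x) {w : Vertex A} (hw : a w ≠ w) :
    IsPref A x w :=
  by_contra fun h => hw (ha.2 w h)

lemma rist_anti (h : IsPref A x y) : rist A G y ≤ rist A G x := fun _ hg =>
  ⟨hg.1, fun w hw => hg.2 w fun hyw => hw (h.trans hyw)⟩

lemma isPref_apply_iff_of_mem_rist (ha : a ∈ rist A G x) (w : Vertex A) :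
    IsPref A x (a w) ↔ IsPref A x w := by
  refine ⟨fun haw => by_contra fun hw => ?_, fun hw => by_contra fun haw => ?_⟩
  · exact hw (ha.2 w hw ▸ haw)
  · have : w = a w := by simpa using ((rist A G x).inv_mem ha).2 _ haw
    exact haw (this ▸ hw)

lemma commute_of_mem_rist (hxy : ∀ w, IsPref A x w → ¬ IsPref A y w)
    (ha : a ∈ rist A G x) (hb : b ∈ rist A G y) : Commute a b := by
  refine Equiv.ext fun w => ?_
  simp only [Perm.mul_apply]
  by_cases hx : IsPref A x w
  · have hax : IsPref A x (a w) := (isPref_apply_iff_of_mem_rist ha w).2 hx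
    rw [hb.2 w (hxy w hx), hb.2 _ (hxy _ hax)]
  · by_cases hy : IsPref A y w
    · have hby : IsPref A y (b w) := (isPref_apply_iff_of_mem_rist hb w).2 hy
      rw [ha.2 w hx, ha.2 _ fun h => hxy _ h hby]
    · rw [ha.2 w hx, hb.2 w hy, ha.2 w hx]

lemma rist_inf_rist_eq_bot (hxy : ∀ w, IsPref A x w → ¬ IsPref A y w) :
    rist A G x ⊓ rist A G y = ⊥ :=
  (Subgroup.eq_bot_iff_forall _).2 fun _ ⟨hax, hay⟩ => Equiv.ext fun w =>
    (em (IsPref A x w)).elim (fun hx => hay.2 w (hxy w hx)) (hax.2 w)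

lemma conj_mem_rist (hG : G ≤ treeAut A) {g : Perm (Vertex A)} (hg : g ∈ G)
    (ha : a ∈ rist A G x) : g * a * g⁻¹ ∈ rist A G (g x) := by
  refine ⟨G.mul_mem (G.mul_mem hg ha.1) (G.inv_mem hg), fun w hw => ?_⟩
  have hw' : ¬ IsPref A x (g⁻¹ w) := fun h => hw <| by
    simpa using (hG hg x (g⁻¹ w)).1 h
  rw [Perm.mul_apply, Perm.mul_apply, ha.2 _ hw', Perm.coe_inv, g.apply_symm_apply]

end RigidStabiliser

section Subgroups

variable {P : Type*} [Group P]

lemma derivedIter_antitone (H : Subgroup P) : Antitone (derivedIter H) :=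
  antitone_nat_of_succ_le fun k => Subgroup.commutator_le_self (derivedIter H k)

lemma derivedIter_le_self (H : Subgroup P) (k : ℕ) : derivedIter H k ≤ H :=
  derivedIter_antitone H k.zero_le

lemma derivedIter_mono {H K : Subgroup P} (h : H ≤ K) : ∀ k, derivedIter H k ≤ derivedIter K k
  | 0 => h
  | k + 1 => Subgroup.commutator_mono (derivedIter_mono h k) (derivedIter_mono h k)

lemma commutatorElement_mul_right_of_commute {a b c : P} (h : Commute a c) :
    ⁅a, b * c⁆ = ⁅a, b⁆ := by
  calc a * (b * c) * a⁻¹ * (b * c)⁻¹ = a * b * (c * a⁻¹) * c⁻¹ * b⁻¹ := by group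
    _ = a * b * (a⁻¹ * c) * c⁻¹ * b⁻¹ := by rw [h.inv_left.eq]
    _ = a * b * a⁻¹ * b⁻¹ := by group

lemma NormalIn.commutatorElement_mem {H K : Subgroup P} (hHK : NormalIn H K) {k h : P}
    (hk : k ∈ K) (hh : h ∈ H) : ⁅k, h⁆ ∈ H :=
  H.mul_mem (hHK.2 k hk h hh) (H.inv_mem hh)

lemma SubnormalIn.eq_of_zero {H G : Subgroup P} (h : SubnormalIn H G 0) : H = G :=
  h.elim fun _ ⟨hc0, hck, _⟩ => hck.symm.trans hc0

lemma SubnormalIn.exists_normalIn_of_succ {H G : Subgroup P} {k : ℕ}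
    (h : SubnormalIn H G (k + 1)) : ∃ K, SubnormalIn K G k ∧ NormalIn H K := by
  obtain ⟨c, hc0, hck, hnorm⟩ := h
  exact ⟨c k, ⟨c, hc0, rfl, fun i hi => hnorm i (by omega)⟩, hck ▸ hnorm k k.lt_succ_self⟩

lemma SubnormalIn.le {H G : Subgroup P} : ∀ {k : ℕ}, SubnormalIn H G k → H ≤ G
  | 0, h => h.eq_of_zero.le
  | _ + 1, h =>
    let ⟨_, hK, hHK⟩ := h.exists_normalIn_of_succ
    hHK.1.trans hK.le

end Subgroups

section WeaklyBranch

variable {A : ℕ → Type} {G : Subgroup (Perm (Vertex A))}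

lemma exists_apply_ne_of_ne_one {p : Perm (Vertex A)} (hp : p ≠ 1) : ∃ x, p x ≠ x :=
  not_forall.mp fun h => hp (Equiv.ext h)

lemma commutatorElement_ne_one_of_mem_rist (hG : G ≤ treeAut A) {g r : Perm (Vertex A)}
    {x : Vertex A} (hg : g ∈ G) (hx : g x ≠ x) (hr : r ∈ rist A G x) (hr₁ : r ≠ 1) :
    ⁅g, r⁆ ≠ 1 := by
  intro hgr
  have hconj : g * r * g⁻¹ = r := by
    rwa [commutatorElement_def, mul_inv_eq_one] at hgr
  have : r ∈ rist A G x ⊓ rist A G (g x) := ⟨hr, hconj ▸ conj_mem_rist hG hg hr⟩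
  rw [rist_inf_rist_eq_bot fun _ => not_isPref_apply_of_isPref (hG hg) hx] at this
  exact hr₁ (Subgroup.mem_bot.1 this)

lemma derivedIter_rist_ne_bot (hG : G ≤ treeAut A) (hrist : ∀ v, rist A G v ≠ ⊥) :
    ∀ (k : ℕ) (u : Vertex A), derivedIter (rist A G u) k ≠ ⊥
  | 0, u => hrist u
  | k + 1, u => fun hbot => by
    obtain ⟨g, hg, hg₁⟩ := (Subgroup.bot_or_exists_ne_one _).resolve_left
      (derivedIter_rist_ne_bot hG hrist k u)
    obtain ⟨x, hx⟩ := exists_apply_ne_of_ne_one hg₁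
    obtain ⟨r, hr, hr₁⟩ := (Subgroup.bot_or_exists_ne_one _).resolve_left
      (derivedIter_rist_ne_bot hG hrist k x)
    have hux : IsPref A u x := isPref_of_mem_rist_of_apply_ne (derivedIter_le_self _ k hg) hx
    refine commutatorElement_ne_one_of_mem_rist hG (rist_le u (derivedIter_le_self _ k hg)) hx
      (derivedIter_le_self _ k hr) hr₁ ((Subgroup.eq_bot_iff_forall _).1 hbot _ ?_)
    exact Subgroup.commutator_mem_commutator hg (derivedIter_mono (rist_anti hux) k hr)

lemma derivedIter_rist_le_of_subnormalIn (hG : G ≤ treeAut A) :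
    ∀ {k : ℕ} {H : Subgroup (Perm (Vertex A))}, SubnormalIn H G k →
      ∀ {h : Perm (Vertex A)} {u : Vertex A}, h ∈ H → h u ≠ u → derivedIter (rist A G u) k ≤ H
  | 0, _, hH, _, _, _, _ => hH.eq_of_zero ▸ rist_le _
  | k + 1, H, hH, h, u, hh, hu => by
    obtain ⟨K, hK, hHK⟩ := hH.exists_normalIn_of_succ
    have hDK : derivedIter (rist A G u) k ≤ K :=
      derivedIter_rist_le_of_subnormalIn hG hK (hHK.1 hh) hu
    have hhG : h ∈ G := hK.le (hHK.1 hh)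
    refine Subgroup.commutator_le.2 fun a ha b hb => ?_
    have hb' : h * b⁻¹ * h⁻¹ ∈ rist A G (h u) :=
      conj_mem_rist hG hhG (inv_mem (derivedIter_le_self _ k hb))
    have hcomm : ⁅a, ⁅b, h⁆⁆ = ⁅a, b⁆ := by
      rw [commutatorElement_def b, mul_assoc b, mul_assoc b]
      exact commutatorElement_mul_right_of_commute
        (commute_of_mem_rist (fun _ => not_isPref_apply_of_isPref (hG hhG) hu)
          (derivedIter_le_self _ k ha) hb')
    rw [← hcomm]
    exact hHK.commutatorElement_mem (hDK ha) (hHK.commutatorElement_mem (hDK hb) hh)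

lemma apply_eq_of_isPref_of_commutator_eq_bot (hG : G ≤ treeAut A)
    (hrist : ∀ v, rist A G v ≠ ⊥) {H₁ H₂ : Subgroup (Perm (Vertex A))} {k₁ k₂ : ℕ}
    (h₁ : SubnormalIn H₁ G k₁) (h₂ : SubnormalIn H₂ G k₂) (hcomm : ⁅H₁, H₂⁆ = ⊥)
    {h : Perm (Vertex A)} {u : Vertex A} (hh : h ∈ H₂) (hu : h u ≠ u)
    {g : Perm (Vertex A)} (hg : g ∈ H₁) {w : Vertex A} (huw : IsPref A u w) : g w = w := by
  by_contra hw
  set D := derivedIter (rist A G w) (max k₁ k₂)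
  have hD₁ : D ≤ H₁ := (derivedIter_antitone _ (le_max_left _ _)).trans
    (derivedIter_rist_le_of_subnormalIn hG h₁ hg hw)
  have hD₂ : D ≤ H₂ := (derivedIter_antitone _ (le_max_right _ _)).trans <|
    (derivedIter_mono (rist_anti huw) k₂).trans (derivedIter_rist_le_of_subnormalIn hG h₂ hh hu)
  refine derivedIter_rist_ne_bot hG hrist (max k₁ k₂ + 1) w (le_bot_iff.1 ?_)
  exact hcomm ▸ Subgroup.commutator_mono hD₁ hD₂

end WeaklyBranch

section Projection

variable {A : ℕ → Type}

lemma isPref_concat (n : ℕ) (v : Vertex A) (hv : v.1 = n) (w : Vertex (shift A n)) :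
    IsPref A v (concat A n v hv w) := by
  subst hv
  exact ⟨Nat.le_add_right _ _, fun i => by simp [concat]⟩

lemma concat_injective (n : ℕ) (v : Vertex A) (hv : v.1 = n) :
    Function.Injective (concat A n v hv) := by
  rintro ⟨p, f⟩ ⟨p', f'⟩ he
  obtain rfl : p = p' := Nat.add_left_cancel (congrArg Sigma.fst he)
  have hf := eq_of_heq (Sigma.mk.inj he).2
  congr
  funext j
  have hj := congrFun hf ⟨n + j, Nat.add_lt_add_left j.2 n⟩
  simp only [add_lt_iff_neg_left, not_lt_zero, dite_false] at hj
  have hidx : (⟨n + j - n, by omega⟩ : Fin p) = j := Fin.ext (Nat.add_sub_cancel_left ..)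
  have hj' : f _ = f' _ := (cast_inj _).mp hj
  rwa [hidx] at hj'

lemma projStab_eq_bot {H : Subgroup (Perm (Vertex A))} {n : ℕ} {v : Vertex A} (hv : v.1 = n)
    (hfix : ∀ g ∈ H, ∀ w, IsPref A v w → g w = w) : projStab A H n v hv = ⊥ :=
  (Subgroup.eq_bot_iff_forall _).2 fun _ ⟨g, hg, _, hgσ⟩ => Equiv.ext fun w =>
    concat_injective n v hv <| (hgσ w).symm.trans (hfix g hg _ (isPref_concat n v hv w))

end Projection

theorem exists_vertex_trivial_projection_of_commute_general
    (A : ℕ → Type)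
    (G H₁ H₂ : Subgroup (Perm (Vertex A))) (hG : IsWeaklyBranch A G)
    (k₁ : ℕ) (h1 : SubnormalIn H₁ G k₁) (k₂ : ℕ) (h2 : SubnormalIn H₂ G k₂)
    (hcomm : ⁅H₁, H₂⁆ = (⊥ : Subgroup (Perm (Vertex A))))
    (hH₂ : H₂ ≠ ⊥) :
    ∃ v : Vertex A, H₁ ≤ stG A G v ∧ projStab A H₁ v.1 v rfl = ⊥ := by
  obtain ⟨h, hh, hh₁⟩ := H₂.bot_or_exists_ne_one.resolve_left hH₂
  obtain ⟨u, hu⟩ := exists_apply_ne_of_ne_one hh₁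
  have hfix : ∀ g ∈ H₁, ∀ w, IsPref A u w → g w = w := fun g hg w huw =>
    apply_eq_of_isPref_of_commutator_eq_bot hG.1 hG.2.2 h1 h2 hcomm hh hu hg huw
  exact ⟨u, fun g hg => ⟨h1.le hg, hfix g hg u (isPref_refl u)⟩, projStab_eq_bot rfl hfix⟩

/-- If `H₁, H₂` are commuting subnormal subgroups of a weakly
branch group `G` and `H₂` is non-trivial, then there is a vertex `v` such that
`H₁ ≤ St_G(v)` and `φ_v(H₁) = 1`. -/
theorem exists_vertex_trivial_projection_of_commute
    (A : ℕ → Type) [∀ i, Fintype (A i)] (hcard : ∀ i, 2 ≤ Fintype.card (A i))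
    (G H₁ H₂ : Subgroup (Perm (Vertex A))) (hG : IsWeaklyBranch A G)
    (k₁ : ℕ) (h1 : SubnormalIn H₁ G k₁) (k₂ : ℕ) (h2 : SubnormalIn H₂ G k₂)
    (hcomm : ⁅H₁, H₂⁆ = (⊥ : Subgroup (Perm (Vertex A))))
    (hH₂ : H₂ ≠ ⊥) :
    ∃ v : Vertex A, H₁ ≤ stG A G v ∧ projStab A H₁ v.1 v rfl = ⊥ :=
  exists_vertex_trivial_projection_of_commute_general A G H₁ H₂ hG k₁ h1 k₂ h2 hcomm hH₂

end PaperDefs
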